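/- arXiv:2603.12957 — 4 statements merged into one kernel-verified Lean document; each statement's English description precedes it below -/
import Mathlib

section
/- Let b ∈ C¹([x₀, ∞)) be positive with b' positive and increasing. For a forward Euler step x̄ₙ = x̄_{n-1} + h_{n-1}b(x̄_{n-1}) with h_{n-1} > 0, the discrepancy between the step length and the exact hitting-time increment satisfies |h_{n-1} − ∫_{x̄_{n-1}}^{x̄ₙ} 1/b(x) dx| ≤ b'(x̄ₙ) h_{n-1}². -/
/-!
Since `b` is increasing, `1/b` is squeezed between `1/b(x̄ₙ)` and `1/b(x̄ₙ₋₁)` on the step, so the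
integral lies between `h b(x̄ₙ₋₁)/b(x̄ₙ)` and `h`. Hence the error is at most
`h (b(x̄ₙ) − b(x̄ₙ₋₁))/b(x̄ₙ)`, and the mean value theorem with `b'` increasing bounds
`b(x̄ₙ) − b(x̄ₙ₋₁)` by `b'(x̄ₙ) h b(x̄ₙ₋₁) ≤ b'(x̄ₙ) h b(x̄ₙ)`.
-/

open Set intervalIntegral

theorem monotoneOn_of_hasDerivAt_nonneg {D : Set ℝ} (hD : Convex ℝ D) {f f' : ℝ → ℝ}
    (hf : ∀ x ∈ D, HasDerivAt f (f' x) x) (hf' : ∀ x ∈ D, 0 ≤ f' x) : MonotoneOn f D :=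
  monotoneOn_of_hasDerivWithinAt_nonneg hD
    (fun x hx ↦ (hf x hx).continuousAt.continuousWithinAt)
    (fun x hx ↦ (hf x (interior_subset hx)).hasDerivWithinAt)
    (fun x hx ↦ hf' x (interior_subset hx))

theorem sub_le_mul_sub_of_hasDerivAt_of_monotoneOn {f f' : ℝ → ℝ} {x y : ℝ} (hxy : x ≤ y)
    (hf : ∀ z ∈ Icc x y, HasDerivAt f (f' z) z) (hf' : MonotoneOn f' (Icc x y)) :
    f y - f x ≤ f' y * (y - x) := by
  rcases hxy.eq_or_lt with rfl | hlt
  · simp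
  obtain ⟨c, hc, hslope⟩ := exists_hasDerivAt_eq_slope f f' hlt
    (fun z hz ↦ (hf z hz).continuousAt.continuousWithinAt)
    (fun z hz ↦ hf z (Ioo_subset_Icc_self hz))
  have hc_le : f' c ≤ f' y :=
    hf' (Ioo_subset_Icc_self hc) (right_mem_Icc.mpr hxy) hc.2.le
  rw [← div_le_iff₀ (sub_pos.mpr hlt), ← hslope]
  exact hc_le

theorem AntitoneOn.mul_le_integral {f : ℝ → ℝ} {a b : ℝ} (hab : a ≤ b)
    (hf : AntitoneOn f (Icc a b)) : (b - a) * f b ≤ ∫ x in a..b, f x := by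
  have hint : IntervalIntegrable f MeasureTheory.volume a b :=
    AntitoneOn.intervalIntegrable (by rwa [uIcc_of_le hab])
  simpa using integral_mono_on hab intervalIntegrable_const hint
    fun x hx ↦ hf hx (right_mem_Icc.mpr hab) hx.2

theorem AntitoneOn.integral_le_mul {f : ℝ → ℝ} {a b : ℝ} (hab : a ≤ b)
    (hf : AntitoneOn f (Icc a b)) : ∫ x in a..b, f x ≤ (b - a) * f a := by
  have hint : IntervalIntegrable f MeasureTheory.volume a b :=
    AntitoneOn.intervalIntegrable (by rwa [uIcc_of_le hab])
  simpa using integral_mono_on hab hint intervalIntegrable_const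
    fun x hx ↦ hf (left_mem_Icc.mpr hab) hx hx.1

theorem euler_local_time_error_general
    (b b' : ℝ → ℝ) (x₀ h xprev : ℝ)
    (hb_pos : ∀ y, x₀ ≤ y → 0 < b y)
    (hb_deriv : ∀ y, x₀ ≤ y → HasDerivAt b (b' y) y)
    (hb'_pos : ∀ y, x₀ ≤ y → 0 < b' y)
    (hb'_mono : MonotoneOn b' (Ici x₀))
    (hxprev : x₀ ≤ xprev)
    (hh : 0 < h) :
    |h - ∫ y in xprev..(xprev + h * b xprev), 1 / b y|
      ≤ b' (xprev + h * b xprev) * h ^ 2 := by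
  set xn := xprev + h * b xprev
  have hstep : xn - xprev = h * b xprev := by ring
  have hle : xprev ≤ xn := le_add_of_nonneg_right (mul_nonneg hh.le (hb_pos xprev hxprev).le)
  have hxn : x₀ ≤ xn := hxprev.trans hle
  have hsub : Icc xprev xn ⊆ Ici x₀ := fun y hy ↦ hxprev.trans hy.1
  have hb_mono : MonotoneOn b (Ici x₀) :=
    monotoneOn_of_hasDerivAt_nonneg (convex_Ici x₀) hb_deriv fun y hy ↦ (hb'_pos y hy).le
  have hinv_anti : AntitoneOn (fun y ↦ 1 / b y) (Icc xprev xn) := fun y hy z hz hyz ↦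
    one_div_le_one_div_of_le (hb_pos y (hsub hy)) (hb_mono (hsub hy) (hsub hz) hyz)
  have hupper := hinv_anti.integral_le_mul hle
  have hlower := hinv_anti.mul_le_integral hle
  have hmvt : b xn - b xprev ≤ b' xn * (h * b xprev) := hstep ▸
    sub_le_mul_sub_of_hasDerivAt_of_monotoneOn hle (fun z hz ↦ hb_deriv z (hsub hz))
      (hb'_mono.mono hsub)
  have hbn : 0 < b xn := hb_pos xn hxn
  have hb_le : b xprev ≤ b xn := hb_mono hxprev hxn hle
  have hb'n : 0 < b' xn := hb'_pos xn hxn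
  have hint_le : ∫ y in xprev..xn, 1 / b y ≤ h := by
    rwa [hstep, mul_assoc, mul_one_div_cancel (hb_pos xprev hxprev).ne', mul_one] at hupper
  rw [abs_of_nonneg (sub_nonneg.mpr hint_le)]
  calc h - ∫ y in xprev..xn, 1 / b y
      ≤ h - h * b xprev * (1 / b xn) := by rw [← hstep]; linarith
    _ = h * (b xn - b xprev) / b xn := by field_simp
    _ ≤ h * (b' xn * (h * b xprev)) / b xn := by gcongr
    _ ≤ h * (b' xn * (h * b xn)) / b xn := by gcongr
    _ = b' xn * h ^ 2 := by field_simp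

/-- Local discrepancy between the Euler step length and the exact hitting-time
increment: `|h − ∫_{x̄_{n-1}}^{x̄ₙ} dx/b(x)| ≤ b'(x̄ₙ) h²`. -/
theorem euler_local_time_error
    (b b' : ℝ → ℝ) (x₀ h xprev : ℝ)
    (hx₀ : 0 < x₀)
    (hb_pos : ∀ y, x₀ ≤ y → 0 < b y)
    (hb_deriv : ∀ y, x₀ ≤ y → HasDerivAt b (b' y) y)
    (hb'_pos : ∀ y, x₀ ≤ y → 0 < b' y)
    (hb'_mono : MonotoneOn b' (Ici x₀))
    (hxprev : x₀ ≤ xprev)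
    (hh : 0 < h) :
    |h - ∫ y in xprev..(xprev + h * b xprev), 1 / b y|
      ≤ b' (xprev + h * b xprev) * h ^ 2 :=
  euler_local_time_error_general b b' x₀ h xprev hb_pos hb_deriv hb'_pos hb'_mono hxprev hh
end

section
/- Under the assumption b(x)·x ≥ Č |x|^{2+α} on D = {|x| > δ} with Č, α > 0, let τ(x₀) be the blow-up time and τ_ε(x₀) the first time |x(t)| ≥ r(ε), where r(ε) = (1/(Č α ε))^{1/α}. Then 0 ≤ τ(x₀) − τ_ε(x₀) ≤ ε for every x₀ ∈ D with |x₀| < r(ε). -/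
/-!
Along the trajectory the growth condition gives `d/dt ‖x‖^(-α) ≤ -Č α`. A positive quantity
decreasing at that rate dies out within `‖x t‖^(-α) / (Č α)` of time `t`, so after any time `t`
with `‖x t‖ ≥ r(ε)` the solution survives for at most `r(ε)^(-α) / (Č α) = ε`. Blow-up forces the
level `r(ε)` to be reached before `τ`, hence `τ - ε ≤ τ_ε < τ`.
-/

open Set Filter Topology

open scoped RealInnerProductSpace

theorem Real.sq_rpow_half {a : ℝ} (ha : 0 ≤ a) (q : ℝ) : (a ^ 2) ^ (q / 2) = a ^ q := by
  rw [← Real.rpow_natCast_mul ha, Nat.cast_ofNat, mul_div_cancel₀ q two_ne_zero]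

section NormRpow

variable {F : Type*} [NormedAddCommGroup F] [InnerProductSpace ℝ F]

theorem HasDerivAt.norm_rpow_const {f : ℝ → F} {f' : F} {t : ℝ} (hf : HasDerivAt f f' t)
    (h0 : f t ≠ 0) (p : ℝ) :
    HasDerivAt (fun s => ‖f s‖ ^ p) (p * ‖f t‖ ^ (p - 2) * ⟪f t, f'⟫) t := by
  have h := hf.norm_sq.rpow_const (p := p / 2) (Or.inl (by positivity))
  simp only [Real.sq_rpow_half (norm_nonneg _)] at h
  convert h using 1
  rw [show p / 2 - 1 = (p - 2) / 2 by ring, Real.sq_rpow_half (norm_nonneg _)]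
  ring

theorem norm_rpow_neg_add_mul_le {x v : ℝ → F} {I : Set ℝ} (hI : Convex ℝ I) {C α : ℝ}
    (hα : 0 ≤ α) (hx : ∀ t ∈ I, x t ≠ 0) (hode : ∀ t ∈ I, HasDerivAt x (v t) t)
    (hgrowth : ∀ t ∈ I, C * ‖x t‖ ^ (2 + α) ≤ ⟪v t, x t⟫) {t s : ℝ} (ht : t ∈ I) (hs : s ∈ I)
    (hts : t ≤ s) : ‖x s‖ ^ (-α) + C * α * (s - t) ≤ ‖x t‖ ^ (-α) := by
  have hderiv : ∀ u ∈ I, HasDerivAt (fun s => ‖x s‖ ^ (-α))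
      (-α * ‖x u‖ ^ (-α - 2) * ⟪x u, v u⟫) u :=
    fun u hu => (hode u hu).norm_rpow_const (hx u hu) (-α)
  have hbound : ∀ u ∈ I, -α * ‖x u‖ ^ (-α - 2) * ⟪x u, v u⟫ ≤ -(C * α) := by
    intro u hu
    have hpos : 0 < ‖x u‖ := norm_pos_iff.mpr (hx u hu)
    have hcancel : ‖x u‖ ^ (-α - 2) * ‖x u‖ ^ (2 + α) = 1 := by
      rw [← Real.rpow_add hpos, show -α - 2 + (2 + α) = 0 by ring, Real.rpow_zero]
    calc -α * ‖x u‖ ^ (-α - 2) * ⟪x u, v u⟫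
        ≤ -α * ‖x u‖ ^ (-α - 2) * (C * ‖x u‖ ^ (2 + α)) := by
          rw [real_inner_comm]
          exact mul_le_mul_of_nonpos_left (hgrowth u hu)
            (mul_nonpos_of_nonpos_of_nonneg (neg_nonpos.mpr hα) (by positivity))
      _ = -(C * α) := by linear_combination (-α * C) * hcancel
  have hmvt := hI.image_sub_le_mul_sub_of_deriv_le
    (fun u hu => (hderiv u hu).continuousAt.continuousWithinAt)
    (fun u hu => (hderiv u (interior_subset hu)).differentiableAt.differentiableWithinAt)
    (fun u hu => (hderiv u (interior_subset hu)).deriv ▸ hbound u (interior_subset hu))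
    t ht s hs hts
  linarith

end NormRpow

theorem sub_le_div_of_forall_add_mul_sub_le {φ : ℝ → ℝ} {a τ K : ℝ} (hK : 0 < K) (ha : a < τ)
    (hpos : ∀ s ∈ Ico a τ, 0 < φ s) (hdecay : ∀ s ∈ Ico a τ, φ s + K * (s - a) ≤ φ a) :
    τ - a ≤ φ a / K := by
  by_contra! hlt
  have hφa : 0 ≤ φ a / K := (div_pos (hpos a ⟨le_rfl, ha⟩) hK).le
  have hs : a + φ a / K ∈ Ico a τ := ⟨by linarith, by linarith⟩
  have hK' : K * (a + φ a / K - a) = φ a := by field_simp; ring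
  linarith [hdecay _ hs, hpos _ hs]

noncomputable def firstHittingTime (f : ℝ → ℝ) (r : ℝ) : ℝ := sInf {t : ℝ | 0 ≤ t ∧ r ≤ f t}

section FirstHittingTime

variable {f : ℝ → ℝ} {τ : ℝ}

theorem exists_mem_Ico_le_of_tendsto_atTop (hτ : 0 < τ) (hf : Tendsto f (𝓝[<] τ) atTop)
    (r : ℝ) : ∃ t ∈ Ico 0 τ, r ≤ f t := by
  have hpos : ∀ᶠ t in 𝓝[<] τ, 0 < t := mem_nhdsWithin_of_mem_nhds (isOpen_Ioi.mem_nhds hτ)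
  obtain ⟨t, ⟨hr, ht0⟩, htτ⟩ :=
    ((hf.eventually_ge_atTop r).and hpos |>.and self_mem_nhdsWithin).exists
  exact ⟨t, ⟨ht0.le, htτ⟩, hr⟩

theorem firstHittingTime_lt_of_tendsto_atTop (hτ : 0 < τ) (hf : Tendsto f (𝓝[<] τ) atTop)
    (r : ℝ) : firstHittingTime f r < τ := by
  obtain ⟨t, ht, hr⟩ := exists_mem_Ico_le_of_tendsto_atTop hτ hf r
  exact (csInf_le (s := {t | 0 ≤ t ∧ r ≤ f t}) ⟨0, fun _ hs => hs.1⟩ ⟨ht.1, hr⟩).trans_lt ht.2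

theorem le_firstHittingTime_of_tendsto_atTop {ε r : ℝ} (hτ : 0 < τ) (hε : 0 ≤ ε)
    (hf : Tendsto f (𝓝[<] τ) atTop) (hlate : ∀ t ∈ Ico 0 τ, r ≤ f t → τ - ε ≤ t) :
    τ - ε ≤ firstHittingTime f r := by
  obtain ⟨t₀, ht₀, hr₀⟩ := exists_mem_Ico_le_of_tendsto_atTop hτ hf r
  refine le_csInf (s := {t | 0 ≤ t ∧ r ≤ f t}) ⟨t₀, ht₀.1, hr₀⟩ fun t ht => ?_
  rcases lt_or_ge t τ with htτ | hτt
  · exact hlate t ⟨ht.1, htτ⟩ ht.2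
  · linarith

end FirstHittingTime

theorem exit_time_close_to_blow_up_general
    {n : ℕ} (b : EuclideanSpace ℝ (Fin n) → EuclideanSpace ℝ (Fin n))
    (δ Ccheck α ε τ : ℝ)
    (x : ℝ → EuclideanSpace ℝ (Fin n))
    (hδ : 0 < δ)
    (hC : 0 < Ccheck) (hα : 0 < α) (hε : 0 < ε)
    (hb_growth : ∀ y : EuclideanSpace ℝ (Fin n),
      δ < ‖y‖ → Ccheck * ‖y‖ ^ (2 + α) ≤ (inner ℝ (b y) y : ℝ))
    (hτ : 0 < τ)
    (hdom : ∀ t ∈ Ico (0:ℝ) τ, δ < ‖x t‖)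
    (hode : ∀ t ∈ Ico (0:ℝ) τ, HasDerivAt x (b (x t)) t)
    -- τ is the blow-up time of the solution:
    (hblow : Tendsto (fun t => ‖x t‖) (nhdsWithin τ (Iio τ)) atTop) :
    0 ≤ τ - sInf {t : ℝ | 0 ≤ t ∧ (1 / (Ccheck * α * ε)) ^ (1 / α) ≤ ‖x t‖} ∧
    τ - sInf {t : ℝ | 0 ≤ t ∧ (1 / (Ccheck * α * ε)) ^ (1 / α) ≤ ‖x t‖} ≤ ε := by
  set r := (1 / (Ccheck * α * ε)) ^ (1 / α)
  have hr : 0 < r := by positivity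
  have hrα : r ^ (-α) = Ccheck * α * ε := by
    rw [← Real.rpow_mul (by positivity), one_div_mul_eq_div, neg_div_self hα.ne', Real.rpow_neg_one,
      one_div, inv_inv]
  have hne : ∀ t ∈ Ico 0 τ, x t ≠ 0 := fun t ht => norm_pos_iff.mp (hδ.trans (hdom t ht))
  have hlate : ∀ t ∈ Ico 0 τ, r ≤ ‖x t‖ → τ - ε ≤ t := by
    intro t ht htr
    have hsub : Ico t τ ⊆ Ico 0 τ := Ico_subset_Ico_left ht.1
    have hlife := calc
      τ - t ≤ ‖x t‖ ^ (-α) / (Ccheck * α) :=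
        sub_le_div_of_forall_add_mul_sub_le (by positivity) ht.2
          (fun s hs => Real.rpow_pos_of_pos (norm_pos_iff.mpr (hne s (hsub hs))) _)
          (fun s hs => norm_rpow_neg_add_mul_le (convex_Ico 0 τ) hα.le hne hode
            (fun u hu => hb_growth _ (hdom u hu)) ht (hsub hs) hs.1)
      _ ≤ r ^ (-α) / (Ccheck * α) := by
        gcongr ?_ / _
        exact Real.rpow_le_rpow_of_nonpos hr htr (neg_nonpos.mpr hα.le)
      _ = ε := by rw [hrα]; field_simp
    linarith
  show 0 ≤ τ - firstHittingTime (fun t => ‖x t‖) r ∧ τ - firstHittingTime (fun t => ‖x t‖) r ≤ ε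
  exact ⟨by linarith [firstHittingTime_lt_of_tendsto_atTop hτ hblow r],
    by linarith [le_firstHittingTime_of_tendsto_atTop hτ hε.le hblow hlate]⟩

/-- Lemma 1 of the paper: with `r(ε) = (1/(Č α ε))^{1/α}`, the blow-up time `τ`
and the hitting time `τ_ε` of the level `r(ε)` satisfy `0 ≤ τ − τ_ε ≤ ε`. -/
theorem exit_time_close_to_blow_up
    {n : ℕ} (b : EuclideanSpace ℝ (Fin n) → EuclideanSpace ℝ (Fin n))
    (δ Ccheck α ε τ : ℝ) (x₀ : EuclideanSpace ℝ (Fin n))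
    (x : ℝ → EuclideanSpace ℝ (Fin n))
    (hδ : 0 < δ)
    (hC : 0 < Ccheck) (hα : 0 < α) (hε : 0 < ε)
    (hb_growth : ∀ y : EuclideanSpace ℝ (Fin n),
      δ < ‖y‖ → Ccheck * ‖y‖ ^ (2 + α) ≤ (inner ℝ (b y) y : ℝ))
    (hx₀ : δ < ‖x₀‖)
    (hx₀r : ‖x₀‖ < (1 / (Ccheck * α * ε)) ^ (1 / α))
    (hx0 : x 0 = x₀)
    (hτ : 0 < τ)
    (hdom : ∀ t ∈ Ico (0:ℝ) τ, δ < ‖x t‖)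
    (hode : ∀ t ∈ Ico (0:ℝ) τ, HasDerivAt x (b (x t)) t)
    -- τ is the blow-up time of the solution:
    (hblow : Tendsto (fun t => ‖x t‖) (nhdsWithin τ (Iio τ)) atTop) :
    0 ≤ τ - sInf {t : ℝ | 0 ≤ t ∧ (1 / (Ccheck * α * ε)) ^ (1 / α) ≤ ‖x t‖} ∧
    τ - sInf {t : ℝ | 0 ≤ t ∧ (1 / (Ccheck * α * ε)) ^ (1 / α) ≤ ‖x t‖} ≤ ε :=
  exit_time_close_to_blow_up_general b δ Ccheck α ε τ x hδ hC hα hε hb_growth hτ hdom hode hblow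
end

section
/- Let b ∈ C¹(D, ℝⁿ) on D = {|x| > δ} with δ > 1, and suppose b(x)·x ≥ Č |x|² (log|x|)^{1+α} on D for constants Č, α > 0. Set r(ε) = exp((1/(Č α ε))^{1/α}). Then for any x₀ ∈ D, the blow-up time τ(x₀) and the exit time τ_ε(x₀) of the ball of radius r(ε) satisfy 0 ≤ τ(x₀) − τ_ε(x₀) ≤ ε. -/
/-!
Along a trajectory in `{|x| > 1}`, the growth condition makes the derivative of
`t + (Č α)⁻¹ (log |x(t)|)^(-α)` nonpositive. Since the second summand is nonnegative, every time
`t` before blow-up satisfies `τ ≤ t + (Č α)⁻¹ (log |x(t)|)^(-α)`, and the right-hand side is at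
most `t + ε` as soon as `|x(t)| ≥ r(ε)`. Blow-up guarantees that the ball of radius `r(ε)` is left
before `τ`.
-/

open Set Filter Topology
open scoped RealInnerProductSpace

section Trajectory

variable {E : Type*} [NormedAddCommGroup E] [InnerProductSpace ℝ E]

theorem HasDerivAt.log_norm {x : ℝ → E} {v : E} {t : ℝ} (hx : HasDerivAt x v t)
    (h0 : x t ≠ 0) :
    HasDerivAt (fun s => Real.log ‖x s‖) (⟪x t, v⟫ / ‖x t‖ ^ 2) t := by
  have hsq : (0 : ℝ) < ‖x t‖ ^ 2 := by positivity
  have hhalf : (fun s => Real.log ‖x s‖) = fun s => Real.log (‖x s‖ ^ 2) / 2 := by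
    funext s
    rw [Real.log_pow]
    push_cast
    ring
  rw [hhalf]
  exact ((hx.norm_sq.log hsq.ne').div_const 2).congr_deriv (by ring)

theorem antitoneOn_add_log_norm_rpow_neg {x v : ℝ → E} {s : Set ℝ} {C α : ℝ}
    (hs : Convex ℝ s) (hC : 0 < C) (hα : 0 < α) (hx : ∀ t ∈ s, HasDerivAt x (v t) t)
    (hnorm : ∀ t ∈ s, 1 < ‖x t‖)
    (hgrowth : ∀ t ∈ s, C * ‖x t‖ ^ 2 * Real.log ‖x t‖ ^ (1 + α) ≤ ⟪v t, x t⟫) :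
    AntitoneOn (fun t => t + (C * α)⁻¹ * Real.log ‖x t‖ ^ (-α)) s := by
  have hderiv : ∀ t ∈ s, HasDerivAt (fun t => t + (C * α)⁻¹ * Real.log ‖x t‖ ^ (-α))
      (1 + (C * α)⁻¹ * (⟪x t, v t⟫ / ‖x t‖ ^ 2 * -α *
        Real.log ‖x t‖ ^ (-α - 1))) t := fun t ht =>
    have hlog := (hx t ht).log_norm (norm_pos_iff.mp (one_pos.trans (hnorm t ht)))
    (hasDerivAt_id t).add ((hlog.rpow_const (Or.inl (Real.log_pos (hnorm t ht)).ne')).const_mul _)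
  refine antitoneOn_of_hasDerivWithinAt_nonpos hs
    (fun t ht => (hderiv t ht).continuousAt.continuousWithinAt)
    (fun t ht => (hderiv t (interior_subset ht)).hasDerivWithinAt) fun t ht => ?_
  replace ht := interior_subset ht
  set L := Real.log ‖x t‖
  have hL : 0 < L := Real.log_pos (hnorm t ht)
  have hsq : (0 : ℝ) < ‖x t‖ ^ 2 := pow_pos (one_pos.trans (hnorm t ht)) 2
  -- the growth condition bounds the radial speed `⟪x, v⟫ / |x|²` of `log |x|` from below
  have hspeed : C * L ^ (1 + α) ≤ ⟪x t, v t⟫ / ‖x t‖ ^ 2 := by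
    rw [le_div_iff₀ hsq, real_inner_comm]
    linarith [hgrowth t ht]
  have hcancel : L ^ (1 + α) * L ^ (-α - 1) = 1 := by
    rw [← Real.rpow_add hL, show 1 + α + (-α - 1) = 0 by ring, Real.rpow_zero]
  have hpow : 0 < L ^ (-α - 1) := Real.rpow_pos_of_pos hL _
  have key : 1 ≤ C⁻¹ * (⟪x t, v t⟫ / ‖x t‖ ^ 2) * L ^ (-α - 1) := by
    calc (1 : ℝ) = C⁻¹ * (C * L ^ (1 + α)) * L ^ (-α - 1) := by
          field_simp
          linarith [hcancel]
      _ ≤ C⁻¹ * (⟪x t, v t⟫ / ‖x t‖ ^ 2) * L ^ (-α - 1) := by gcongr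
  have hexpand : (C * α)⁻¹ * (⟪x t, v t⟫ / ‖x t‖ ^ 2 * -α * L ^ (-α - 1)) =
      -(C⁻¹ * (⟪x t, v t⟫ / ‖x t‖ ^ 2) * L ^ (-α - 1)) := by
    field_simp
  rw [hexpand]
  linarith

end Trajectory

theorem le_add_of_antitoneOn_add {g : ℝ → ℝ} {a b t₀ : ℝ}
    (hanti : AntitoneOn (fun t => t + g t) (Ico a b)) (hg : ∀ t ∈ Ico a b, 0 ≤ g t)
    (ht₀ : t₀ ∈ Ico a b) : b ≤ t₀ + g t₀ := by
  refine le_of_forall_lt_imp_le_of_dense fun t htb => ?_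
  rcases lt_or_ge t t₀ with htt₀ | ht₀t
  · linarith [hg t₀ ht₀]
  · have ht : t ∈ Ico a b := ⟨ht₀.1.trans ht₀t, htb⟩
    linarith [hanti ht₀ ht ht₀t, hg t ht]

theorem inv_mul_log_rpow_neg_le {C α ε r : ℝ} (hC : 0 < C) (hα : 0 < α) (hε : 0 < ε)
    (hr : Real.exp ((1 / (C * α * ε)) ^ (1 / α)) ≤ r) :
    (C * α)⁻¹ * Real.log r ^ (-α) ≤ ε := by
  set L := (1 / (C * α * ε)) ^ (1 / α)
  have hL : 0 < L := by positivity
  have hLr : L ≤ Real.log r := by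
    rwa [Real.le_log_iff_exp_le (lt_of_lt_of_le (Real.exp_pos L) hr)]
  have hLα : L ^ (-α) = C * α * ε := by
    rw [← Real.rpow_mul (by positivity), show 1 / α * -α = -1 by field_simp, Real.rpow_neg_one,
      one_div, inv_inv]
  calc (C * α)⁻¹ * Real.log r ^ (-α) ≤ (C * α)⁻¹ * L ^ (-α) := by
        exact mul_le_mul_of_nonneg_left
          (Real.rpow_le_rpow_of_nonpos hL hLr (neg_nonpos.mpr hα.le)) (by positivity)
    _ = ε := by
        rw [hLα]
        field_simp

theorem sInf_exit_mem_Icc {u : ℝ → ℝ} {τ ε R : ℝ} (hτ : 0 < τ)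
    (hblow : Tendsto u (𝓝[<] τ) atTop) (hclose : ∀ t ∈ Ico 0 τ, R ≤ u t → τ ≤ t + ε) :
    sInf {t | 0 ≤ t ∧ R ≤ u t} ∈ Icc (τ - ε) τ := by
  obtain ⟨t₁, hRt₁, ht₁pos, ht₁τ⟩ := ((hblow.eventually_ge_atTop R).and
    ((lt_mem_nhds hτ).filter_mono nhdsWithin_le_nhds |>.and self_mem_nhdsWithin)).exists
  have hbdd : BddBelow {t | 0 ≤ t ∧ R ≤ u t} := ⟨0, fun _ ht => ht.1⟩
  refine ⟨le_csInf ⟨t₁, ht₁pos.le, hRt₁⟩ fun t ⟨ht0, hRt⟩ => ?_,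
    (csInf_le hbdd ⟨ht₁pos.le, hRt₁⟩).trans ht₁τ.le⟩
  rcases lt_or_ge t τ with htτ | hτt
  · linarith [hclose t ⟨ht0, htτ⟩ hRt]
  · linarith [hclose t₁ ⟨ht₁pos.le, ht₁τ⟩ hRt₁]

theorem exit_time_close_to_blow_up_log_general
    {n : ℕ} (b : EuclideanSpace ℝ (Fin n) → EuclideanSpace ℝ (Fin n))
    (δ Ccheck α ε τ : ℝ)
    (x : ℝ → EuclideanSpace ℝ (Fin n))
    (hδ : 1 < δ)
    (hC : 0 < Ccheck) (hα : 0 < α) (hε : 0 < ε)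
    (hb_growth : ∀ y : EuclideanSpace ℝ (Fin n),
      δ < ‖y‖ → Ccheck * ‖y‖ ^ 2 * Real.log ‖y‖ ^ (1 + α) ≤ (inner ℝ (b y) y : ℝ))
    (hτ : 0 < τ)
    (hdom : ∀ t ∈ Ico (0:ℝ) τ, δ < ‖x t‖)
    (hode : ∀ t ∈ Ico (0:ℝ) τ, HasDerivAt x (b (x t)) t)
    (hblow : Tendsto (fun t => ‖x t‖) (nhdsWithin τ (Iio τ)) atTop) :
    0 ≤ τ - sInf {t : ℝ | 0 ≤ t ∧ Real.exp ((1 / (Ccheck * α * ε)) ^ (1 / α)) ≤ ‖x t‖} ∧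
    τ - sInf {t : ℝ | 0 ≤ t ∧ Real.exp ((1 / (Ccheck * α * ε)) ^ (1 / α)) ≤ ‖x t‖} ≤ ε := by
  have hnorm : ∀ t ∈ Ico 0 τ, 1 < ‖x t‖ := fun t ht => hδ.trans (hdom t ht)
  have hanti := antitoneOn_add_log_norm_rpow_neg (convex_Ico 0 τ) hC hα hode hnorm
    fun t ht => hb_growth _ (hdom t ht)
  have hnonneg : ∀ t ∈ Ico 0 τ, 0 ≤ (Ccheck * α)⁻¹ * Real.log ‖x t‖ ^ (-α) := fun t ht =>
    have := Real.log_nonneg (hnorm t ht).le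
    by positivity
  have hclose : ∀ t ∈ Ico 0 τ,
      Real.exp ((1 / (Ccheck * α * ε)) ^ (1 / α)) ≤ ‖x t‖ → τ ≤ t + ε := fun t ht hr =>
    (le_add_of_antitoneOn_add hanti hnonneg ht).trans
      (add_le_add_right (inv_mul_log_rpow_neg_le hC hα hε hr) t)
  obtain ⟨hlower, hupper⟩ := sInf_exit_mem_Icc hτ hblow hclose
  exact ⟨by linarith, by linarith⟩

/-- Corollary 1 of the paper (slower growth): if `b(x)·x ≥ Č |x|² (log|x|)^{1+α}`
on `D = {|x| > δ}` with `δ > 1` and `r(ε) = exp((1/(Č α ε))^{1/α})`, then the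
blow-up time `τ` and the exit time `τ_ε` of the ball of radius `r(ε)` satisfy
`0 ≤ τ − τ_ε ≤ ε`. -/
theorem exit_time_close_to_blow_up_log
    {n : ℕ} (b : EuclideanSpace ℝ (Fin n) → EuclideanSpace ℝ (Fin n))
    (δ Ccheck α ε τ : ℝ) (x₀ : EuclideanSpace ℝ (Fin n))
    (x : ℝ → EuclideanSpace ℝ (Fin n))
    (hδ : 1 < δ)
    (hC : 0 < Ccheck) (hα : 0 < α) (hε : 0 < ε)
    (hb_smooth : ContDiffOn ℝ 1 b {y | δ < ‖y‖})
    (hb_growth : ∀ y : EuclideanSpace ℝ (Fin n),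
      δ < ‖y‖ → Ccheck * ‖y‖ ^ 2 * Real.log ‖y‖ ^ (1 + α) ≤ (inner ℝ (b y) y : ℝ))
    (hx₀ : δ < ‖x₀‖)
    (hx₀r : ‖x₀‖ < Real.exp ((1 / (Ccheck * α * ε)) ^ (1 / α)))
    (hx0 : x 0 = x₀)
    (hτ : 0 < τ)
    (hdom : ∀ t ∈ Ico (0:ℝ) τ, δ < ‖x t‖)
    (hode : ∀ t ∈ Ico (0:ℝ) τ, HasDerivAt x (b (x t)) t)
    (hblow : Tendsto (fun t => ‖x t‖) (nhdsWithin τ (Iio τ)) atTop) :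
    0 ≤ τ - sInf {t : ℝ | 0 ≤ t ∧ Real.exp ((1 / (Ccheck * α * ε)) ^ (1 / α)) ≤ ‖x t‖} ∧
    τ - sInf {t : ℝ | 0 ≤ t ∧ Real.exp ((1 / (Ccheck * α * ε)) ^ (1 / α)) ≤ ‖x t‖} ≤ ε :=
  exit_time_close_to_blow_up_log_general b δ Ccheck α ε τ x hδ hC hα hε hb_growth hτ hdom hode hblow
end

section
/- Suppose b : D → ℝⁿ satisfies the directionality condition b(x)·x ≥ C₂ |b(x)| |x| for all x ∈ D and some C₂ ∈ (0, 1]. Then for a forward Euler step x̄ₙ = x̄_{n-1} + h b(x̄_{n-1}) with h > 0 and x̄_{n-1} ∈ D, one has |x̄ₙ| ≥ |x̄_{n-1}| + C₂ |b(x̄_{n-1})| h. -/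
open scoped RealInnerProductSpace

theorem norm_add_smul_ge_of_inner_ge {E : Type*} [NormedAddCommGroup E] [InnerProductSpace ℝ E]
    {x v : E} {c h : ℝ} (hx : x ≠ 0) (hh : 0 ≤ h) (hdir : c * ‖v‖ * ‖x‖ ≤ ⟪v, x⟫) :
    ‖x‖ + c * ‖v‖ * h ≤ ‖x + h • v‖ := by
  have hx : 0 < ‖x‖ := norm_pos_iff.mpr hx
  -- project `x + h • v` onto the direction of `x`
  refine le_of_mul_le_mul_right ?_ hx
  calc (‖x‖ + c * ‖v‖ * h) * ‖x‖ = ‖x‖ ^ 2 + h * (c * ‖v‖ * ‖x‖) := by ring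
    _ ≤ ‖x‖ ^ 2 + h * ⟪v, x⟫ := by gcongr
    _ = ⟪x + h • v, x⟫ := by
      rw [inner_add_left, real_inner_smul_left, real_inner_self_eq_norm_sq]
    _ ≤ ‖x + h • v‖ * ‖x‖ := real_inner_le_norm _ _

theorem euler_norm_increase_directional_general
    {n : ℕ} (b : EuclideanSpace ℝ (Fin n) → EuclideanSpace ℝ (Fin n))
    (δ C₂ h : ℝ) (xprev : EuclideanSpace ℝ (Fin n))
    (hδ : 0 < δ)
    (hdir : ∀ y : EuclideanSpace ℝ (Fin n),
      δ < ‖y‖ → C₂ * ‖b y‖ * ‖y‖ ≤ (inner ℝ (b y) y : ℝ))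
    (hxprev : δ < ‖xprev‖)
    (hh : 0 < h) :
    ‖xprev‖ + C₂ * ‖b xprev‖ * h ≤ ‖xprev + h • b xprev‖ :=
  norm_add_smul_ge_of_inner_ge (norm_pos_iff.mp (hδ.trans hxprev)) hh.le (hdir xprev hxprev)

/-- Case (a) of Lemma 2: under the directionality condition
`b(x)·x ≥ C₂ |b(x)| |x|`, an Euler step increases the norm by at least
`C₂ |b(x̄_{n-1})| h`. -/
theorem euler_norm_increase_directional
    {n : ℕ} (b : EuclideanSpace ℝ (Fin n) → EuclideanSpace ℝ (Fin n))
    (δ C₂ h : ℝ) (xprev : EuclideanSpace ℝ (Fin n))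
    (hδ : 0 < δ)
    (hC₂ : 0 < C₂) (hC₂' : C₂ ≤ 1)
    (hdir : ∀ y : EuclideanSpace ℝ (Fin n),
      δ < ‖y‖ → C₂ * ‖b y‖ * ‖y‖ ≤ (inner ℝ (b y) y : ℝ))
    (hxprev : δ < ‖xprev‖)
    (hh : 0 < h) :
    ‖xprev‖ + C₂ * ‖b xprev‖ * h ≤ ‖xprev + h • b xprev‖ :=
  euler_norm_increase_directional_general b δ C₂ h xprev hδ hdir hxprev hh
end
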